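/- arXiv:2007.02593 — 2 statements merged into one kernel-verified Lean document; each statement's English description precedes it below -/
import Mathlib

section
/- Let $C_f, \tau, \alpha, \beta \in \mathbb{R}$ with $\tau > 0$, and set $\gamma = \pi/(2\tau)$. Define $K_x(x,z) = C_f e^{-\gamma z}\big(-\sqrt{2}\,\tau \sin(\gamma x) + \tfrac{2\alpha}{\gamma}\sin(\gamma x)\cos(\tfrac{\gamma\tau}{2}+\beta)\big)$ and $K_z(x,z) = C_f e^{-\gamma z}\big(-\sqrt{2}\,\tau \cos(\gamma x) + \tfrac{2\alpha}{\gamma}\cos(\gamma x)\cos(\tfrac{\gamma\tau}{2}+\beta)\big)$. Then for all $x, z \in \mathbb{R}$, the determinant of the $2\times 2$ matrix $\Phi_K(x,z) = \begin{pmatrix} K_x(x,z) & K_x(x+3\tau,z) \\ K_z(x,z) & K_z(x+3\tau,z)\end{pmatrix}$ equals $\big(C_f e^{-\gamma z}\big)^2\big(\sqrt{2}\,\tau - \tfrac{2\alpha}{\gamma}\cos(\tfrac{\gamma\tau}{2}+\beta)\big)^2$; in particular the determinant does not depend on $x$. -/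
open Real

/-- The determinant of the two-phase force coefficient matrix `Φ_K(x,z)` of a
forcer in the square-coil maglev stage equals
`(C_f e^{-γz})² (√2 τ - (2α/γ) cos(γτ/2 + β))²`; in particular it does not
depend on `x`. -/
theorem det_PhiK (Cf τ α β : ℝ) (hτ : τ > 0) (γ : ℝ) (hγ : γ = Real.pi / (2 * τ))
    (Kx Kz : ℝ → ℝ → ℝ)
    (hKx : ∀ x z, Kx x z =
      Cf * Real.exp (-(γ * z)) *
        (-(Real.sqrt 2 * τ * Real.sin (γ * x)) +
          2 * α / γ * Real.sin (γ * x) * Real.cos (γ * τ / 2 + β)))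
    (hKz : ∀ x z, Kz x z =
      Cf * Real.exp (-(γ * z)) *
        (-(Real.sqrt 2 * τ * Real.cos (γ * x)) +
          2 * α / γ * Real.cos (γ * x) * Real.cos (γ * τ / 2 + β))) :
    ∀ x z : ℝ,
      (!![Kx x z, Kx (x + 3 * τ) z;
          Kz x z, Kz (x + 3 * τ) z] : Matrix (Fin 2) (Fin 2) ℝ).det =
        (Cf * Real.exp (-(γ * z))) ^ 2 *
          (Real.sqrt 2 * τ - 2 * α / γ * Real.cos (γ * τ / 2 + β)) ^ 2 := by
  intro x z
  have hτ' : τ ≠ 0 := ne_of_gt hτ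
  have hγτ : γ * τ = Real.pi / 2 := by
    rw [hγ]; field_simp
  have harg : γ * (x + 3 * τ) = γ * x + 3 * (Real.pi / 2) := by
    have : γ * (x + 3 * τ) = γ * x + 3 * (γ * τ) := by ring
    rw [this, hγτ]
  have hsin : Real.sin (γ * (x + 3 * τ)) = -Real.cos (γ * x) := by
    rw [harg]
    have : γ * x + 3 * (Real.pi / 2) = (γ * x + Real.pi) + Real.pi / 2 := by ring
    rw [this, Real.sin_add_pi_div_two, Real.cos_add_pi]
  have hcos : Real.cos (γ * (x + 3 * τ)) = Real.sin (γ * x) := by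
    rw [harg]
    have : γ * x + 3 * (Real.pi / 2) = (γ * x + Real.pi) + Real.pi / 2 := by ring
    rw [this, Real.cos_add_pi_div_two, Real.sin_add_pi]
    ring
  rw [Matrix.det_fin_two_of, hKx, hKx, hKz, hKz, hsin, hcos]
  have hpyth := Real.sin_sq_add_cos_sq (γ * x)
  linear_combination ((Cf * Real.exp (-(γ * z))) ^ 2 *
    (Real.sqrt 2 * τ - 2 * α / γ * Real.cos (γ * τ / 2 + β)) ^ 2) * hpyth
end

section
/- Let $C_f, \tau, \alpha, \beta \in \mathbb{R}$ with $C_f > 0$, $\tau > 0$, $\alpha > 0$, and set $\gamma = \pi/(2\tau)$. Define $K_x(x,z) = C_f e^{-\gamma z}\big(-\sqrt{2}\,\tau \sin(\gamma x) + \tfrac{2\alpha}{\gamma}\sin(\gamma x)\cos(\tfrac{\gamma\tau}{2}+\beta)\big)$, $K_z(x,z) = C_f e^{-\gamma z}\big(-\sqrt{2}\,\tau \cos(\gamma x) + \tfrac{2\alpha}{\gamma}\cos(\gamma x)\cos(\tfrac{\gamma\tau}{2}+\beta)\big)$, and $\Phi_K(x,z) = \begin{pmatrix} K_x(x,z) &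 K_x(x+3\tau,z) \\ K_z(x,z) & K_z(x+3\tau,z)\end{pmatrix}$. If $\cos(\beta + \pi/4) \neq \tfrac{\sqrt{2}\,\pi}{4\alpha}$, then for every $(x,z) \in \mathbb{R}^2$ the determinant of $\Phi_K(x,z)$ is strictly positive, and hence $\Phi_K(x,z)$ is invertible for every $(x,z)$. -/
open Real

/-- If `cos(β + π/4) ≠ √2 π / (4α)`, then the two-phase force coefficient
matrix `Φ_K(x,z)` of the square-coil maglev forcer has strictly positive
determinant at every position `(x,z)`, hence is invertible everywhere (no
singularity in the current allocation, full 6-DOF controllability). -/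
theorem PhiK_pos_det_invertible (Cf τ α β : ℝ) (hCf : Cf > 0) (hτ : τ > 0) (hα : α > 0)
    (γ : ℝ) (hγ : γ = Real.pi / (2 * τ))
    (Kx Kz : ℝ → ℝ → ℝ)
    (hKx : ∀ x z, Kx x z =
      Cf * Real.exp (-(γ * z)) *
        (-(Real.sqrt 2 * τ * Real.sin (γ * x)) +
          2 * α / γ * Real.sin (γ * x) * Real.cos (γ * τ / 2 + β)))
    (hKz : ∀ x z, Kz x z =
      Cf * Real.exp (-(γ * z)) *
        (-(Real.sqrt 2 * τ * Real.cos (γ * x)) +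
          2 * α / γ * Real.cos (γ * x) * Real.cos (γ * τ / 2 + β)))
    (Φ : ℝ → ℝ → Matrix (Fin 2) (Fin 2) ℝ)
    (hΦ : ∀ x z, Φ x z =
      !![Kx x z, Kx (x + 3 * τ) z;
         Kz x z, Kz (x + 3 * τ) z])
    (hcos : Real.cos (β + Real.pi / 4) ≠ Real.sqrt 2 * Real.pi / (4 * α)) :
    ∀ x z : ℝ, 0 < (Φ x z).det ∧ IsUnit (Φ x z) := by
  have hτ' : τ ≠ 0 := ne_of_gt hτ
  have hγτ : γ * τ = Real.pi / 2 := by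
    rw [hγ]; field_simp
  have hγpos : 0 < γ := by
    rw [hγ]; positivity
  have hγ' : γ ≠ 0 := ne_of_gt hγpos
  have hang : γ * τ / 2 + β = β + Real.pi / 4 := by
    rw [hγτ]; ring
  set A : ℝ := -(Real.sqrt 2 * τ) + 2 * α / γ * Real.cos (γ * τ / 2 + β) with hA
  have hAne : A ≠ 0 := by
    intro h0
    apply hcos
    rw [hA, hang] at h0
    have hc : 2 * α / γ * Real.cos (β + Real.pi / 4) = Real.sqrt 2 * τ := by
      linarith
    have hτγ : τ = Real.pi / (2 * γ) := by
      field_simp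
      linarith [hγτ]
    rw [hτγ] at hc
    field_simp at hc ⊢
    nlinarith [hc, Real.pi_pos]
  intro x z
  set C : ℝ := Cf * Real.exp (-(γ * z)) with hC
  have hCpos : 0 < C := by positivity
  have hsh : γ * (x + 3 * τ) = γ * x + Real.pi + Real.pi / 2 := by
    have : γ * (x + 3 * τ) = γ * x + 3 * (γ * τ) := by ring
    rw [this, hγτ]; ring
  have hs : Real.sin (γ * (x + 3 * τ)) = -Real.cos (γ * x) := by
    rw [hsh, Real.sin_add_pi_div_two, Real.cos_add_pi]
  have hcx : Real.cos (γ * (x + 3 * τ)) = Real.sin (γ * x) := by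
    rw [hsh, Real.cos_add_pi_div_two, Real.sin_add_pi, neg_neg]
  have hdet : (Φ x z).det = C ^ 2 * A ^ 2 := by
    rw [hΦ, Matrix.det_fin_two_of, hKx, hKx, hKz, hKz, hs, hcx, hA, ← hC]
    have hpy := Real.sin_sq_add_cos_sq (γ * x)
    linear_combination (C * (-(Real.sqrt 2 * τ) + 2 * α / γ * Real.cos (γ * τ / 2 + β))) ^ 2 * hpy
  have hdetpos : 0 < (Φ x z).det := by
    rw [hdet]
    have h1 : 0 < A ^ 2 := by positivity
    positivity
  refine ⟨hdetpos, ?_⟩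
  exact (Matrix.isUnit_iff_isUnit_det _).mpr (isUnit_iff_ne_zero.mpr (ne_of_gt hdetpos))
end
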